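/- Both K5 and K_{3,3} admit embeddings in the torus in which, for any chosen pair of vertices x and y, some face contains x and y each twice in the alternating cyclic order x, y, x, y. -/

import Mathlib

open SimpleGraph

namespace AltPaper

variable {V : Type*} {W : Type*} {U : Type*}

/-- The dart-reversal permutation of a graph. -/
def dartRev (G : SimpleGraph V) : Equiv.Perm G.Dart :=
  Function.Involutive.toPerm SimpleGraph.Dart.symm SimpleGraph.Dart.symm_involutive

/-- A combinatorial embedding of `G` into an orientable surface, given by a rotation system:
a permutation of the darts whose orbits are exactly the stars of the vertices. -/
structure RotSys (G : SimpleGraph V) where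
  rot : Equiv.Perm G.Dart
  fst_rot : ∀ d : G.Dart, (rot d).fst = d.fst
  orbit_full : ∀ d d' : G.Dart, d.fst = d'.fst → ∃ n : ℕ, (rot ^ n) d = d'

namespace RotSys

variable {G : SimpleGraph V}

/-- The face-tracing permutation of the rotation system. -/
def facePerm (R : RotSys G) : Equiv.Perm G.Dart := (dartRev G).trans R.rot

/-- The number of faces of the embedding: the number of orbits of the face permutation. -/
noncomputable def numFaces (R : RotSys G) : ℕ :=
  Nat.card (MulAction.orbitRel.Quotient (Subgroup.zpowers R.facePerm) G.Dart)

/-- The number of non-isolated vertices: orbits of the rotation. -/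
noncomputable def numVerts (R : RotSys G) : ℕ :=
  Nat.card (MulAction.orbitRel.Quotient (Subgroup.zpowers R.rot) G.Dart)

/-- The number of connected components containing at least one edge. -/
noncomputable def numComps (R : RotSys G) : ℕ :=
  Nat.card (MulAction.orbitRel.Quotient (Subgroup.closure {R.rot, dartRev G}) G.Dart)

/-- By Euler's formula, the (total, orientable) genus of the embedding `R` is at most `k`.
Isolated vertices are irrelevant for the genus and are ignored. -/
noncomputable def genusLE (R : RotSys G) (k : ℕ) : Prop :=
  2 * R.numComps + Nat.card G.edgeSet ≤ 2 * k + R.numFaces + R.numVerts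

/-- Vertices `v₁ v₂ v₃ v₄` appear (in this cyclic order) on a common face of `R`. -/
def cyclicOrderedFace (R : RotSys G) (v₁ v₂ v₃ v₄ : V) : Prop :=
  ∃ (d : G.Dart) (a b c : ℕ), 0 < a ∧ a < b ∧ b < c ∧
    c < Function.minimalPeriod (⇑R.facePerm) d ∧
    d.fst = v₁ ∧ ((R.facePerm ^ a) d).fst = v₂ ∧ ((R.facePerm ^ b) d).fst = v₃ ∧
    ((R.facePerm ^ c) d).fst = v₄

/-- There is a face of `R` in which `x` and `y` appear (at least) twice, in the alternating
cyclic order `x, y, x, y`. -/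
def altFace (R : RotSys G) (x y : V) : Prop := R.cyclicOrderedFace x y x y

/-- `u` and `v` lie on a common face of `R`. -/
def Cofacial (R : RotSys G) (u v : V) : Prop :=
  ∃ (d : G.Dart) (n : ℕ), d.fst = u ∧ ((R.facePerm ^ n) d).fst = v

/-- All vertices of `s` lie on a common face of `R`. -/
def CofacialSet (R : RotSys G) (s : Set V) : Prop :=
  ∃ d : G.Dart, ∀ v ∈ s, ∃ n : ℕ, ((R.facePerm ^ n) d).fst = v

end RotSys

/-- `G` embeds in the orientable surface of genus `k`. -/
def GenusLE (G : SimpleGraph V) (k : ℕ) : Prop := ∃ R : RotSys G, R.genusLE k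

/-- `G` has an embedding in the orientable surface of genus `k` with a face in which the
vertices `x` and `y` appear twice, in alternating cyclic order. -/
def AltEmb (G : SimpleGraph V) (x y : V) (k : ℕ) : Prop :=
  ∃ R : RotSys G, R.genusLE k ∧ R.altFace x y

end AltPaper
namespace AltPaper

variable {V : Type*} {W : Type*} {U : Type*}

/-- A combinatorial embedding of `G` into a (possibly non-orientable) surface:
a rotation system together with a signature on the edges. -/
structure SRS (G : SimpleGraph V) where
  rot : Equiv.Perm G.Dart
  fst_rot : ∀ d : G.Dart, (rot d).fst = d.fst
  orbit_full : ∀ d d' : G.Dart, d.fst = d'.fst → ∃ n : ℕ, (rot ^ n) d = d'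
  sign : Sym2 V → Bool

namespace SRS

variable {G : SimpleGraph V}

/-- Auxiliary involution used in signed face tracing: reverse the dart and update the side. -/
def flip (S : SRS G) : Equiv.Perm (G.Dart × Bool) :=
  Function.Involutive.toPerm (fun p => (p.1.symm, xor p.2 (S.sign p.1.edge)))
    (by
      rintro ⟨d, s⟩
      have h1 : d.symm.symm = d := SimpleGraph.Dart.symm_involutive d
      have h2 : d.symm.edge = d.edge := SimpleGraph.Dart.edge_symm d
      simp [h1, h2, Bool.xor_assoc])

/-- Auxiliary permutation used in signed face tracing: apply the rotation forwards or
backwards according to the current side. -/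
def rotPm (S : SRS G) : Equiv.Perm (G.Dart × Bool) where
  toFun p := (cond p.2 (S.rot p.1) (S.rot.symm p.1), p.2)
  invFun p := (cond p.2 (S.rot.symm p.1) (S.rot p.1), p.2)
  left_inv := by rintro ⟨d, (_ | _)⟩ <;> simp
  right_inv := by rintro ⟨d, (_ | _)⟩ <;> simp

/-- The signed face-tracing permutation, acting on sided darts. -/
def facePerm (S : SRS G) : Equiv.Perm (G.Dart × Bool) := (S.flip).trans (S.rotPm)

/-- Twice the number of faces (each face is traced once on each side). -/
noncomputable def numFaces2 (S : SRS G) : ℕ :=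
  Nat.card (MulAction.orbitRel.Quotient (Subgroup.zpowers S.facePerm) (G.Dart × Bool))

noncomputable def numVerts (S : SRS G) : ℕ :=
  Nat.card (MulAction.orbitRel.Quotient (Subgroup.zpowers S.rot) G.Dart)

noncomputable def numComps (S : SRS G) : ℕ :=
  Nat.card (MulAction.orbitRel.Quotient (Subgroup.closure {S.rot, dartRev G}) G.Dart)

/-- Twice the (total) Euler genus of the embedding, via Euler's formula. -/
noncomputable def eulerGenus2 (S : SRS G) : ℤ :=
  4 * S.numComps - 2 * S.numVerts + 2 * Nat.card G.edgeSet - S.numFaces2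

/-- The Euler genus of the embedding is at most `h`. -/
noncomputable def eulerGenusLE (S : SRS G) (h : ℕ) : Prop := S.eulerGenus2 ≤ 2 * h

/-- The sided darts `p` and `q` lie on the same face. -/
def SameFace (S : SRS G) (p q : G.Dart × Bool) : Prop := ∃ n : ℤ, (S.facePerm ^ n) p = q

/-- The set of darts of the facial walk of the face of `p`. -/
def faceDarts (S : SRS G) (p : G.Dart × Bool) : Set G.Dart :=
  {d | ∃ q, S.SameFace p q ∧ q.1 = d}

/-- The vertex `v` appears on the facial walk of the face of `p`. -/
def vertexOnFace (S : SRS G) (p : G.Dart × Bool) (v : V) : Prop :=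
  ∃ d ∈ S.faceDarts p, d.fst = v

/-- The facial walk of the face of `p` visits `x` and `y` in alternating cyclic order
`x, y, x, y`. -/
def altFaceS (S : SRS G) (p : G.Dart × Bool) (x y : V) : Prop :=
  ∃ (a b c : ℕ), 0 < a ∧ a < b ∧ b < c ∧
    c < Function.minimalPeriod (⇑S.facePerm) p ∧
    p.1.fst = x ∧ ((S.facePerm ^ a) p).1.fst = y ∧ ((S.facePerm ^ b) p).1.fst = x ∧
    ((S.facePerm ^ c) p).1.fst = y

end SRS

/-- `G` embeds in the projective plane. -/
def ProjPlanar (G : SimpleGraph V) : Prop := ∃ S : SRS G, S.eulerGenusLE 1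

end AltPaper
namespace AltPaper

variable {V : Type*} {W : Type*} {U : Type*}

/-! ### The multigraph obtained by identifying two vertices, and its planar embeddings -/

/-- The darts of the multigraph `Ĥ` obtained from `G` by identifying `x` and `y`
(deleting the edge `xy` first, if present). -/
def PD (G : SimpleGraph V) (x y : V) : Type _ := {d : G.Dart // d.edge ≠ s(x, y)}

/-- The source vertex of a dart of `Ĥ`: the identified vertex `v_{xy}` is represented by `x`. -/
def psrc (G : SimpleGraph V) (x y : V) [DecidableEq V] (d : PD G x y) : V :=
  if d.val.fst = y then x else d.val.fst

/-- Dart reversal in `Ĥ`. -/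
def prev (G : SimpleGraph V) (x y : V) : Equiv.Perm (PD G x y) :=
  Function.Involutive.toPerm
    (fun d => ⟨d.val.symm, by rw [SimpleGraph.Dart.edge_symm]; exact d.prop⟩)
    (by
      rintro ⟨d, hd⟩
      exact Subtype.ext (SimpleGraph.Dart.symm_involutive d))

/-- A combinatorial embedding (in an orientable surface) of the multigraph `Ĥ` obtained from
`G` by identifying `x` and `y` into the vertex `v_{xy}` (loops are discarded). -/
structure PinchRS (G : SimpleGraph V) (x y : V) [DecidableEq V] where
  rot : Equiv.Perm (PD G x y)
  src_rot : ∀ d, psrc G x y (rot d) = psrc G x y d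
  orbit_full : ∀ d d', psrc G x y d = psrc G x y d' → ∃ n : ℕ, (rot ^ n) d = d'

namespace PinchRS

variable [DecidableEq V] {G : SimpleGraph V} {x y : V}

def facePerm (P : PinchRS G x y) : Equiv.Perm (PD G x y) := (prev G x y).trans P.rot

noncomputable def numFaces (P : PinchRS G x y) : ℕ :=
  Nat.card (MulAction.orbitRel.Quotient (Subgroup.zpowers P.facePerm) (PD G x y))

noncomputable def numVerts (P : PinchRS G x y) : ℕ :=
  Nat.card (MulAction.orbitRel.Quotient (Subgroup.zpowers P.rot) (PD G x y))

noncomputable def numComps (P : PinchRS G x y) : ℕ :=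
  Nat.card (MulAction.orbitRel.Quotient (Subgroup.closure {P.rot, prev G x y}) (PD G x y))

/-- The embedding `P` of `Ĥ` is planar (Euler's formula; the dart count is twice the
edge count). -/
noncomputable def Planar (P : PinchRS G x y) : Prop :=
  4 * P.numComps + Nat.card (PD G x y) ≤ 2 * P.numFaces + 2 * P.numVerts

/-- The number of label transitions in the cyclic sequence of labels around the identified
vertex `v_{xy}`: a dart incident with `v_{xy}` is labelled `X` when it comes from `x`. -/
noncomputable def pinchTrans (P : PinchRS G x y) : ℕ :=
  Nat.card {d : PD G x y // psrc G x y d = x ∧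
    ¬ ((d.val.fst = x) ↔ ((P.rot d).val.fst = x))}

end PinchRS

/-! ### Splitting the two terminals -/

/-- The projection recording that `Sum.inr false` is the second copy of `x` and
`Sum.inr true` is the second copy of `y` (while `Sum.inl x`, `Sum.inl y` are the first
copies). -/
def splitProj (x y : V) : V ⊕ Bool → V
  | Sum.inl v => v
  | Sum.inr false => x
  | Sum.inr true => y

/-- `G'` is obtained from `G` by splitting `x` into `x₁ = Sum.inl x`, `x₂ = Sum.inr false`
and `y` into `y₁ = Sum.inl y`, `y₂ = Sum.inr true`, distributing the incident edges. -/
def IsSplitAt (G : SimpleGraph V) (x y : V) (G' : SimpleGraph (V ⊕ Bool)) : Prop :=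
  (∀ a b, G'.Adj a b → G.Adj (splitProj x y a) (splitProj x y b)) ∧
  (∀ u v, G.Adj u v → ∃ a b, G'.Adj a b ∧ splitProj x y a = u ∧ splitProj x y b = v) ∧
  (∀ a b a' b', G'.Adj a b → G'.Adj a' b' →
    splitProj x y a = splitProj x y a' → splitProj x y b = splitProj x y b' → a = a' ∧ b = b')

/-- The simple graph `G/xy` obtained from `G` by identifying `x` and `y` (the edge `xy`,
if present, is deleted first, and multiple edges are merged); the merged vertex is `x`,
and `y` becomes isolated. -/
def pinch (G : SimpleGraph V) (x y : V) : SimpleGraph V :=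
  SimpleGraph.fromRel (fun a b => a ≠ y ∧ b ≠ y ∧
    ∃ a' b', G.Adj a' b' ∧ (a' = a ∨ (a' = y ∧ a = x)) ∧ (b' = b ∨ (b' = y ∧ b = x)))

/-- The graph `G*`: the `xy`-sum of `G` with a copy of `K₅` minus an edge, the two ends of
the deleted edge being identified with `x` and `y`. -/
def Gstar (G : SimpleGraph V) (x y : V) : SimpleGraph (V ⊕ Fin 3) :=
  SimpleGraph.fromRel (fun a b =>
    (∃ u v, a = Sum.inl u ∧ b = Sum.inl v ∧ G.Adj u v) ∨
    (∃ i j : Fin 3, a = Sum.inr i ∧ b = Sum.inr j) ∨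
    (∃ i : Fin 3, a = Sum.inr i ∧ (b = Sum.inl x ∨ b = Sum.inl y)))

/-- The two-terminal graph corresponding to an `XY`-labelled graph `H`:
add the terminal `x = Sum.inr false` joined to all `X`-labelled vertices and the terminal
`y = Sum.inr true` joined to all `Y`-labelled vertices. -/
def termGraph (H : SimpleGraph W) (lX lY : W → Prop) : SimpleGraph (W ⊕ Bool) :=
  SimpleGraph.fromRel (fun a b =>
    (∃ u v, a = Sum.inl u ∧ b = Sum.inl v ∧ H.Adj u v) ∨
    (∃ u, a = Sum.inr false ∧ b = Sum.inl u ∧ lX u) ∨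
    (∃ u, a = Sum.inr true ∧ b = Sum.inl u ∧ lY u))

/-- Identification map used for `xy`-sums: `w₁ ↦ u₁`, `w₂ ↦ u₂`. -/
def sumRho [DecidableEq W] (u₁ u₂ : U) (w₁ w₂ : W) : W → U ⊕ W := fun w =>
  if w = w₁ then Sum.inl u₁ else if w = w₂ then Sum.inl u₂ else Sum.inr w

/-- The `xy`-sum of `H₁` (with terminals `u₁, u₂`) and `H₂` (with terminals `w₁, w₂`):
their union after identifying `u₁` with `w₁` and `u₂` with `w₂`; the edge between the two
identified vertices is deleted even if present in a summand. -/
def xySum [DecidableEq W] (H₁ : SimpleGraph U) (u₁ u₂ : U)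
    (H₂ : SimpleGraph W) (w₁ w₂ : W) : SimpleGraph (U ⊕ W) :=
  SimpleGraph.fromRel (fun p q => s(p, q) ≠ s(Sum.inl u₁, Sum.inl u₂) ∧
    ((∃ a b, p = Sum.inl a ∧ q = Sum.inl b ∧ H₁.Adj a b) ∨
     (∃ a b, H₂.Adj a b ∧ p = sumRho u₁ u₂ w₁ w₂ a ∧ q = sumRho u₁ u₂ w₁ w₂ b)))

/-! ### Subdivisions -/

/-- A subdivision of `K` contained in `G`: branch vertices are given by the injection `f`,
branches are internally disjoint paths avoiding the branch vertices. -/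
structure SubdivisionEmb (K : SimpleGraph U) (G : SimpleGraph V) where
  f : U → V
  inj : Function.Injective f
  walk : ∀ {a b : U}, K.Adj a b → G.Walk (f a) (f b)
  isPath : ∀ {a b : U} (h : K.Adj a b), (walk h).IsPath
  symmCompat : ∀ {a b : U} (h : K.Adj a b), walk h.symm = (walk h).reverse
  internal_disj : ∀ {a b c d : U} (h₁ : K.Adj a b) (h₂ : K.Adj c d), s(a, b) ≠ s(c, d) →
    ∀ v, v ∈ (walk h₁).support → v ∈ (walk h₂).support →
      (v = f a ∨ v = f b) ∧ (v = f c ∨ v = f d)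
  branch_only : ∀ {a b : U} (h : K.Adj a b) (u : U), f u ∈ (walk h).support → u = a ∨ u = b

/-- The set of vertices of the subdivision. -/
def SubSupport {K : SimpleGraph U} {G : SimpleGraph V} (s : SubdivisionEmb K G) : Set V :=
  {v | ∃ (a b : U) (h : K.Adj a b), v ∈ (s.walk h).support}

/-- The set of edges of the subdivision. -/
def SubEdges {K : SimpleGraph U} {G : SimpleGraph V} (s : SubdivisionEmb K G) : Set (Sym2 V) :=
  {e | ∃ (a b : U) (h : K.Adj a b), e ∈ (s.walk h).edges}

/-! ### Blocks -/

/-- `B` is a block of `H`: a maximal connected vertex set without cutvertex. -/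
def IsBlock (H : SimpleGraph W) (B : Set W) : Prop :=
  B.Nonempty ∧ (H.induce B).Preconnected ∧ (∀ v : W, (H.induce (B \ {v})).Preconnected) ∧
  ∀ B' : Set W, B ⊆ B' →
    ((H.induce B').Preconnected ∧ ∀ v : W, (H.induce (B' \ {v})).Preconnected) → B' = B

/-! ### Bridges of a cycle -/

/-- The `C`-bridge generated by a set `K` of vertices (the component) : `K` together with
all edges leaving `K` and their endpoints. -/
def bridgeOf (G : SimpleGraph V) (K : Set V) : G.Subgraph where
  verts := K ∪ {v | ∃ u ∈ K, G.Adj u v}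
  Adj a b := G.Adj a b ∧ (a ∈ K ∨ b ∈ K)
  adj_sub h := h.1
  edge_vert := by
    rintro a b ⟨h, ha | hb⟩
    · exact Or.inl ha
    · exact Or.inr ⟨b, hb, h.symm⟩
  symm := by
    refine ⟨?_⟩
    rintro a b ⟨h, hab⟩
    exact ⟨h.symm, hab.symm⟩

/-- `B` is a `C`-bridge in `G`, for a closed walk `C`: either a chord of `C`, or a connected
component of `G - V(C)` together with all edges joining it to `C`. -/
def IsCBridge {r : V} (G : SimpleGraph V) (C : G.Walk r r) (B : G.Subgraph) : Prop :=
  (∃ (a b : V) (h : G.Adj a b), a ∈ C.support ∧ b ∈ C.support ∧ s(a, b) ∉ C.edges ∧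
      B = G.subgraphOfAdj h) ∨
  (∃ c : (G.induce {v | v ∉ C.support}).ConnectedComponent,
      B = bridgeOf G (Subtype.val '' c.supp))

/-- The attachments of a `C`-bridge `B`. -/
def attachments {G : SimpleGraph V} {r : V} (C : G.Walk r r) (B : G.Subgraph) : Set V :=
  B.verts ∩ {v | v ∈ C.support}

/-- The vertex set of the segment `C[u,v]` of the closed walk `C` from `u` to `v` (in the
orientation of `C`). -/
def segSet [DecidableEq V] {r : V} (G : SimpleGraph V) (C : G.Walk r r) (u v : V) : Set V :=
  {w | ∃ (hu : u ∈ C.support) (hv : v ∈ (C.rotate u hu).support),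
    w ∈ ((C.rotate u hu).takeUntil v hv).support}

/-- Two `C`-bridges avoid each other. -/
def Avoid [DecidableEq V] {r : V} (G : SimpleGraph V) (C : G.Walk r r)
    (B₁ B₂ : G.Subgraph) : Prop :=
  ∃ u v, u ∈ C.support ∧ v ∈ C.support ∧
    attachments C B₁ ⊆ segSet G C u v ∧ attachments C B₂ ⊆ segSet G C v u

/-- Two `C`-bridges overlap. -/
def Overlap [DecidableEq V] {r : V} (G : SimpleGraph V) (C : G.Walk r r)
    (B₁ B₂ : G.Subgraph) : Prop := ¬ Avoid G C B₁ B₂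

/-! ### The classes `A^k_{xy}` and their obstructions -/

/-- Contraction of the edge `uv` of `G`: `v` is merged into `u` (and becomes isolated). -/
def contractEdge (G : SimpleGraph V) (u v : V) : SimpleGraph V :=
  SimpleGraph.fromRel (fun a b => a ≠ v ∧ b ≠ v ∧
    (G.Adj a b ∨ (a = u ∧ G.Adj v b) ∨ (b = u ∧ G.Adj a v)))

/-- The class `A^k_{xy}`: `G` embeds in the orientable surface of genus `k-1`, or `G` is
`xy`-alternating on the orientable surface of genus `k`. -/
def Akxy (G : SimpleGraph V) (x y : V) (k : ℕ) : Prop :=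
  GenusLE G (k - 1) ∨ AltEmb G x y k

/-- `G` (with terminals `x, y`) is an obstruction for the class `A^k_{xy}`: it is not in the
class, but every deletion and every allowed contraction (one which does not identify the two
terminals) is. -/
def MinimalNotAk (G : SimpleGraph V) (x y : V) (k : ℕ) : Prop :=
  ¬ Akxy G x y k ∧
  (∀ e ∈ G.edgeSet, Akxy (G.deleteEdges {e}) x y k) ∧
  (∀ u v, G.Adj u v → v ≠ x → v ≠ y → Akxy (contractEdge G u v) x y k)

/-! ### Cyclic label sequences -/

/-- The number of transitions between consecutive entries of a list. -/
def listTrans (w : List Bool) : ℕ := ((w.zip w.tail).filter (fun p => p.1 ≠ p.2)).length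

/-- The number of transitions of a list, viewed as a cyclic sequence. -/
def cycTrans : List Bool → ℕ
  | [] => 0
  | a :: t => listTrans ((a :: t) ++ [a])

/-- The cyclic sequence of labelled vertices (labels are subsets of `{X, Y}`, with
`true = X`, `false = Y`) contains six distinct vertices, in this cyclic order or its
reverse, whose labels contain `X, Y, X, Y, X, Y` respectively. -/
def HasXYXYXY (n : ℕ) (lab : ZMod (n + 1) → Finset Bool) : Prop :=
  ∃ (s : ZMod (n + 1)) (a : Fin 6 → ℕ) (ε : Bool), StrictMono a ∧ a 5 ≤ n ∧
    ∀ k : Fin 6, (decide (k.val % 2 = 0)) ∈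
      lab (s + (if ε then ((a k : ℕ) : ZMod (n + 1)) else -((a k : ℕ) : ZMod (n + 1))))

/-- `L` arranges the labels of each vertex of the cyclic sequence into a list (each label
used exactly once). -/
def IsArrangement (n : ℕ) (lab : ZMod (n + 1) → Finset Bool)
    (L : ZMod (n + 1) → List Bool) : Prop :=
  ∀ i, (L i).Nodup ∧ (L i).toFinset = lab i

/-- The cyclic label sequence obtained by concatenating the arranged labels in the cyclic
order of the vertices. -/
def arranged (n : ℕ) (L : ZMod (n + 1) → List Bool) : List Bool :=
  (List.ofFn (fun j : Fin (n + 1) => L ((j : ℕ) : ZMod (n + 1)))).flatten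

end AltPaper

/-!
Explicit rotation systems suffice. The one chosen for `K₅` has 5 faces and the one for `K₃,₃`
has 3, so by Euler's formula (`5 - 10 + 5 = 6 - 9 + 3 = 0`) both are toroidal. In the first, the
face `0 2 1 3 0 4 1` meets `0, 1, 0, 1` in this cyclic order; in the second, writing
`aᵢ = inl i` and `bⱼ = inr j`, the face `a₀ b₀ a₁ b₁ a₀ b₂ a₁ b₀ a₂ b₂` does so for `a₀, a₁` and
for `a₀, b₀`. Isomorphisms transport embeddings together with their genus and faces, and
`Aut K₅ = S₅` is transitive on ordered pairs of distinct vertices, while `S₃ × S₃` and the swap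
of the two sides move `(a₀, a₁)` and `(a₀, b₀)` to every ordered pair of distinct vertices of
`K₃,₃`.
-/

namespace AltPaper

open Equiv Function MulAction Finset

section Permutations

variable {α β : Type*}

theorem apply_zpow_apply_eq {f : Perm α} {F : α → β} (hF : ∀ a, F (f a) = F a) (n : ℤ)
    (a : α) : F ((f ^ n) a) = F a := by
  induction n using Int.induction_on generalizing a with
  | zero => rfl
  | succ n ih => rw [zpow_add_one, Perm.mul_apply, ih, hF]
  | pred n ih => rw [zpow_sub_one, Perm.mul_apply, ih]; simpa using (hF (f⁻¹ a)).symm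

theorem card_range_le_card_orbitRel_quotient_zpowers [Finite α] {f : Perm α} {F : α → β}
    (hF : ∀ a, F (f a) = F a) :
    Nat.card (Set.range F) ≤ Nat.card (orbitRel.Quotient (Subgroup.zpowers f) α) := by
  refine Nat.card_le_card_of_surjective
    (Quotient.lift (Set.rangeFactorization F) ?_) ?_
  · rintro a b ⟨⟨g, hg⟩, rfl⟩
    obtain ⟨n, rfl⟩ := Subgroup.mem_zpowers_iff.mp hg
    exact Subtype.ext (apply_zpow_apply_eq hF n b)
  · rintro ⟨_, a, rfl⟩
    exact ⟨Quotient.mk _ a, rfl⟩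

theorem lt_minimalPeriod_of_pow_apply_ne [Finite α] {f : Perm α} {a : α} {c : ℕ}
    (hc : ∀ m < c, (f ^ (m + 1)) a ≠ a) : c < minimalPeriod f a := by
  by_contra! hle
  have hpos := minimalPeriod_pos_of_mem_periodicPts (f.injective.mem_periodicPts a)
  obtain ⟨m, hm⟩ := Nat.exists_eq_add_one_of_ne_zero hpos.ne'
  refine hc m (by omega) ?_
  rw [← hm, ← Perm.iterate_eq_pow]
  exact isPeriodicPt_minimalPeriod _ _

theorem exists_perm_apply_eq_and_apply_eq [DecidableEq α] {a b x y : α}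
    (hab : a ≠ b) (hxy : x ≠ y) : ∃ σ : Perm α, σ a = x ∧ σ b = y := by
  have hxb : x ≠ swap a x b := fun h => hab ((swap a x).injective ((swap_apply_left a x).trans h))
  refine ⟨swap (swap a x b) y * swap a x, ?_, ?_⟩
  · rw [Perm.mul_apply, swap_apply_left, swap_apply_of_ne_of_ne hxb hxy]
  · rw [Perm.mul_apply, swap_apply_left]

end Permutations

section Rotation

variable {V : Type*} [DecidableEq V] {G : SimpleGraph V}

theorem sameCycle_formPerm {l : List V} (hl : l.Nodup) {v w : V} (hv : v ∈ l) (hw : w ∈ l) :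
    l.formPerm.SameCycle v w := by
  rcases l with _ | ⟨a, _ | ⟨b, t⟩⟩
  · simp at hv
  · simp only [List.mem_singleton] at hv hw
    rw [hv, hw]
  · have hn : 2 ≤ (a :: b :: t).length := by simp
    exact (List.isCycle_formPerm hl hn).sameCycle
      ((List.formPerm_apply_mem_ne_self_iff _ hl _ hv).mpr hn)
      ((List.formPerm_apply_mem_ne_self_iff _ hl _ hw).mpr hn)

def listRotation (ρ : V → List V) (hρ : ∀ u v, v ∈ ρ u ↔ G.Adj u v) : Perm G.Dart where
  toFun d := ⟨(d.fst, (ρ d.fst).formPerm d.snd),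
    (hρ _ _).mp (List.formPerm_mem_iff_mem.mpr ((hρ _ _).mpr d.adj))⟩
  invFun d := ⟨(d.fst, (ρ d.fst).formPerm.symm d.snd),
    (hρ _ _).mp (List.formPerm_mem_iff_mem.mp (by simpa using (hρ _ _).mpr d.adj))⟩
  left_inv d := by ext <;> simp
  right_inv d := by ext <;> simp

theorem listRotation_pow_apply (ρ : V → List V) (hρ : ∀ u v, v ∈ ρ u ↔ G.Adj u v)
    (n : ℕ) (d : G.Dart) :
    ((listRotation ρ hρ ^ n) d).toProd = (d.fst, ((ρ d.fst).formPerm ^ n) d.snd) := by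
  induction n generalizing d with
  | zero => rfl
  | succ n ih =>
    rw [pow_succ, Perm.mul_apply, ih, pow_succ, Perm.mul_apply]
    rfl

def RotSys.ofLists [Fintype V] [DecidableRel G.Adj] (ρ : V → List V)
    (hnodup : ∀ u, (ρ u).Nodup) (hρ : ∀ u, (ρ u).toFinset = G.neighborFinset u) : RotSys G :=
  have hmem (u v : V) : v ∈ ρ u ↔ G.Adj u v := by
    rw [← List.mem_toFinset, hρ, mem_neighborFinset]
  { rot := listRotation ρ hmem
    fst_rot _ := rfl
    orbit_full d d' h := by
      obtain ⟨n, hn⟩ := (sameCycle_formPerm (hnodup d.fst) ((hmem _ _).mpr d.adj)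
        ((hmem _ _).mpr (h ▸ d'.adj))).exists_nat_pow_eq
      refine ⟨n, Dart.ext _ _ ?_⟩
      rw [listRotation_pow_apply, hn, h] }

end Rotation

namespace RotSys

variable {V : Type*} {G : SimpleGraph V} (R : RotSys G)

theorem exists_mem_closure_apply_eq {u v : V} (p : G.Walk u v) {d d' : G.Dart}
    (hd : d.fst = u) (hd' : d'.fst = v) :
    ∃ g ∈ Subgroup.closure {R.rot, dartRev G}, g d = d' := by
  have hrot : R.rot ∈ Subgroup.closure {R.rot, dartRev G} :=
    Subgroup.subset_closure (Set.mem_insert _ _)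
  have hrev : dartRev G ∈ Subgroup.closure {R.rot, dartRev G} :=
    Subgroup.subset_closure (Set.mem_insert_of_mem _ rfl)
  induction p generalizing d with
  | nil =>
    obtain ⟨n, hn⟩ := R.orbit_full d d' (hd.trans hd'.symm)
    exact ⟨_, pow_mem hrot n, hn⟩
  | cons hadj p ih =>
    let e : G.Dart := ⟨(_, _), hadj⟩
    obtain ⟨n, hn⟩ := R.orbit_full d e hd
    obtain ⟨g, hg, rfl⟩ := ih (d := e.symm) rfl hd'
    exact ⟨g * dartRev G * R.rot ^ n, mul_mem (mul_mem hg hrev) (pow_mem hrot n), by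
      rw [Perm.mul_apply, Perm.mul_apply, hn]; rfl⟩

theorem numComps_le_one (hG : G.Preconnected) : R.numComps ≤ 1 := by
  have : Subsingleton (orbitRel.Quotient (Subgroup.closure {R.rot, dartRev G}) G.Dart) := by
    refine ⟨Quotient.ind₂ fun d d' => Quotient.sound ?_⟩
    obtain ⟨g, hg, hgd⟩ := R.exists_mem_closure_apply_eq (hG d'.fst d.fst).some rfl rfl
    exact ⟨⟨g, hg⟩, hgd⟩
  exact Finite.card_le_one_iff_subsingleton.mpr this

/-- A dart labelling that is constant along faces certifies at least as many faces as it takes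
values. -/
theorem genusLE_of_faceLabel [Fintype V] [DecidableEq V] [DecidableRel G.Adj] {β : Type*}
    [DecidableEq β] (hG : G.Preconnected) (F : G.Dart → β) (hF : ∀ d, F (R.facePerm d) = F d)
    {k : ℕ} (hk : #G.edgeFinset + 2 ≤
      2 * k + #(univ.image F) + #(univ.image fun d : G.Dart => d.fst)) :
    R.genusLE k := by
  have hfaces : #(univ.image F) ≤ R.numFaces := by
    rw [← Set.toFinset_range, ← Nat.card_eq_card_toFinset]
    exact card_range_le_card_orbitRel_quotient_zpowers hF
  have hverts : #(univ.image fun d : G.Dart => d.fst) ≤ R.numVerts := by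
    rw [← Set.toFinset_range, ← Nat.card_eq_card_toFinset]
    exact card_range_le_card_orbitRel_quotient_zpowers R.fst_rot
  have hcomps := R.numComps_le_one hG
  unfold genusLE
  rw [Nat.card_eq_fintype_card, card_edgeSet]
  omega

end RotSys

/-- A face is encoded by the cyclic sequence of its vertices; this is the position in `faces` of
the first face traversing `d`. -/
def faceIndex {V : Type*} [DecidableEq V] {G : SimpleGraph V} (faces : List (List V))
    (d : G.Dart) : ℕ :=
  faces.findIdx fun w => (w.zip (w.rotate 1)).contains d.toProd

section Transport

variable {α β : Type*}

theorem permCongr_pow_apply (e : α ≃ β) (f : Perm α) (n : ℕ) (a : α) :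
    (e.permCongr f ^ n) (e a) = e ((f ^ n) a) := by
  rw [show e.permCongr f ^ n = e.permCongr (f ^ n) from (map_pow e.permCongrHom f n).symm,
    permCongr_apply, symm_apply_apply]

theorem minimalPeriod_permCongr (e : α ≃ β) (f : Perm α) (a : α) :
    minimalPeriod (e.permCongr f) (e a) = minimalPeriod f a := by
  have hsemi : Semiconj e f (e.permCongr f) := fun a => by simp
  have hsemi' : Semiconj e.symm (e.permCongr f) f := fun b => by simp
  refine minimalPeriod_eq_minimalPeriod_iff.mpr fun n => ⟨fun h => ?_, fun h => h.map hsemi⟩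
  simpa using h.map hsemi'

theorem card_orbitRel_quotient_map_permCongrHom (e : α ≃ β) (H : Subgroup (Perm α)) :
    Nat.card (orbitRel.Quotient (H.map e.permCongrHom.toMonoidHom) β) =
      Nat.card (orbitRel.Quotient H α) := by
  refine Nat.card_congr (Quotient.congr e.symm fun b b' => ?_)
  simp only [orbitRel_apply, mem_orbit_iff, Subtype.exists, Subgroup.mem_map,
    MulEquiv.coe_toMonoidHom, Perm.smul_def, exists_prop, Subgroup.mk_smul]
  constructor
  · rintro ⟨_, ⟨g, hg, rfl⟩, h⟩
    exact ⟨g, hg, by simp [← h]⟩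
  · rintro ⟨g, hg, h⟩
    exact ⟨_, ⟨g, hg, rfl⟩, by simp [permCongrHom, h]⟩

variable {V V' : Type*} {G : SimpleGraph V} {G' : SimpleGraph V'}

def dartEquiv (e : G ≃g G') : G.Dart ≃ G'.Dart where
  toFun d := ⟨(e d.fst, e d.snd), e.map_adj_iff.mpr d.adj⟩
  invFun d := ⟨(e.symm d.fst, e.symm d.snd), e.symm.map_adj_iff.mpr d.adj⟩
  left_inv d := by ext <;> simp
  right_inv d := by ext <;> simp

@[simp]
theorem dartEquiv_fst (e : G ≃g G') (d : G.Dart) : (dartEquiv e d).fst = e d.fst := rfl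

@[simp]
theorem dartEquiv_symm_fst (e : G ≃g G') (d : G'.Dart) :
    ((dartEquiv e).symm d).fst = e.symm d.fst := rfl

theorem permCongr_dartRev (e : G ≃g G') :
    (dartEquiv e).permCongr (dartRev G) = dartRev G' := by
  ext d <;> simp [dartEquiv, dartRev]

namespace RotSys

variable (R : RotSys G) (e : G ≃g G')

def map : RotSys G' where
  rot := (dartEquiv e).permCongr R.rot
  fst_rot d := by simp [R.fst_rot]
  orbit_full d d' h := by
    obtain ⟨n, hn⟩ := R.orbit_full ((dartEquiv e).symm d) ((dartEquiv e).symm d') (by simp [h])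
    refine ⟨n, ?_⟩
    rw [← (dartEquiv e).apply_symm_apply d, permCongr_pow_apply, hn, Equiv.apply_symm_apply]

theorem facePerm_map : (R.map e).facePerm = (dartEquiv e).permCongr R.facePerm := by
  rw [facePerm, facePerm, ← permCongr_trans, permCongr_dartRev]
  rfl

theorem numFaces_map : (R.map e).numFaces = R.numFaces := by
  rw [numFaces, numFaces, facePerm_map, ← card_orbitRel_quotient_map_permCongrHom (dartEquiv e),
    MonoidHom.map_zpowers]
  rfl

theorem numVerts_map : (R.map e).numVerts = R.numVerts := by
  rw [numVerts, numVerts, ← card_orbitRel_quotient_map_permCongrHom (dartEquiv e),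
    MonoidHom.map_zpowers]
  rfl

theorem numComps_map : (R.map e).numComps = R.numComps := by
  rw [numComps, numComps, ← card_orbitRel_quotient_map_permCongrHom (dartEquiv e),
    MonoidHom.map_closure, Set.image_pair, show (dartEquiv e).permCongrHom.toMonoidHom (dartRev G)
      = dartRev G' from permCongr_dartRev e]
  rfl

theorem genusLE_map {k : ℕ} (h : R.genusLE k) : (R.map e).genusLE k := by
  unfold genusLE at h ⊢
  rwa [numFaces_map, numVerts_map, numComps_map, ← Nat.card_congr e.mapEdgeSet]

theorem cyclicOrderedFace_map {v₁ v₂ v₃ v₄ : V} (h : R.cyclicOrderedFace v₁ v₂ v₃ v₄) :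
    (R.map e).cyclicOrderedFace (e v₁) (e v₂) (e v₃) (e v₄) := by
  obtain ⟨d, a, b, c, ha, hab, hbc, hc, h₁, h₂, h₃, h₄⟩ := h
  refine ⟨dartEquiv e d, a, b, c, ha, hab, hbc, ?_, ?_, ?_, ?_, ?_⟩
  · rwa [facePerm_map, minimalPeriod_permCongr]
  all_goals simp only [facePerm_map, permCongr_pow_apply, dartEquiv_fst, h₁, h₂, h₃, h₄]

end RotSys

theorem AltEmb.map {x y : V} {k : ℕ} (e : G ≃g G') (h : AltEmb G x y k) :
    AltEmb G' (e x) (e y) k :=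
  let ⟨R, hR, hxy⟩ := h
  ⟨R.map e, R.genusLE_map e hR, R.cyclicOrderedFace_map e hxy⟩

end Transport

section CompleteGraphFive

def k5Rotation : Fin 5 → List (Fin 5) :=
  ![[1, 2, 3, 4], [2, 3, 4, 0], [3, 0, 1, 4], [4, 1, 0, 2], [0, 1, 3, 2]]

def k5RotSys : RotSys (completeGraph (Fin 5)) :=
  RotSys.ofLists k5Rotation (by decide) (by decide)

def k5Faces : List (List (Fin 5)) :=
  [[0, 2, 1, 3, 0, 4, 1], [0, 1, 2, 4], [0, 3, 2], [1, 4, 3], [2, 3, 4]]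

theorem k5RotSys_genusLE : k5RotSys.genusLE 1 :=
  k5RotSys.genusLE_of_faceLabel connected_top.preconnected (faceIndex k5Faces) (by decide)
    (by decide)

-- The face through the dart `(0, 2)` is the first walk of `k5Faces`.
theorem k5RotSys_altFace : k5RotSys.altFace 0 1 :=
  ⟨⟨(0, 2), by decide⟩, 2, 4, 6, by norm_num, by norm_num, by norm_num,
    lt_minimalPeriod_of_pow_apply_ne (by decide), rfl, by decide, by decide, by decide⟩

end CompleteGraphFive

section CompleteBipartiteGraph

instance (V W : Type*) : DecidableRel (completeBipartiteGraph V W).Adj :=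
  fun _ _ => inferInstanceAs (Decidable (_ ∨ _))

theorem preconnected_completeBipartiteGraph (V W : Type*) [Nonempty V] [Nonempty W] :
    (completeBipartiteGraph V W).Preconnected := by
  have hVW : ∀ v w, (completeBipartiteGraph V W).Reachable (.inl v) (.inr w) :=
    fun _ _ => Adj.reachable (by simp)
  obtain ⟨v₀⟩ := ‹Nonempty V›
  obtain ⟨w₀⟩ := ‹Nonempty W›
  rintro (v | w) (v' | w')
  · exact (hVW v w₀).trans (hVW v' w₀).symm
  · exact hVW v w'
  · exact (hVW v' w).symm
  · exact (hVW v₀ w).symm.trans (hVW v₀ w')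

def completeBipartiteGraphComm (V W : Type*) :
    completeBipartiteGraph V W ≃g completeBipartiteGraph W V where
  toEquiv := Equiv.sumComm V W
  map_rel_iff' := by rintro (_ | _) (_ | _) <;> simp

def k33Rotation : Fin 3 ⊕ Fin 3 → List (Fin 3 ⊕ Fin 3)
  | .inl 2 => [.inr 0, .inr 2, .inr 1]
  | .inl _ => [.inr 0, .inr 1, .inr 2]
  | .inr 1 => [.inl 0, .inl 2, .inl 1]
  | .inr _ => [.inl 0, .inl 1, .inl 2]

def k33RotSys : RotSys (completeBipartiteGraph (Fin 3) (Fin 3)) :=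
  RotSys.ofLists k33Rotation (by decide) (by decide)

def k33Faces : List (List (Fin 3 ⊕ Fin 3)) :=
  [[.inl 0, .inr 0, .inl 1, .inr 1, .inl 0, .inr 2, .inl 1, .inr 0, .inl 2, .inr 2],
    [.inl 0, .inr 1, .inl 2, .inr 0], [.inl 1, .inr 2, .inl 2, .inr 1]]

theorem k33RotSys_genusLE : k33RotSys.genusLE 1 :=
  k33RotSys.genusLE_of_faceLabel (preconnected_completeBipartiteGraph _ _)
    (faceIndex k33Faces) (by decide) (by decide)

-- The face through the dart `(inl 0, inr 0)` is the first walk of `k33Faces`.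
theorem k33RotSys_altFace_inl_inl : k33RotSys.altFace (.inl 0) (.inl 1) :=
  ⟨⟨(.inl 0, .inr 0), by decide⟩, 2, 4, 6, by norm_num, by norm_num, by norm_num,
    lt_minimalPeriod_of_pow_apply_ne (by decide), rfl, by decide, by decide, by decide⟩

theorem k33RotSys_altFace_inl_inr : k33RotSys.altFace (.inl 0) (.inr 0) :=
  ⟨⟨(.inl 0, .inr 0), by decide⟩, 1, 4, 7, by norm_num, by norm_num, by norm_num,
    lt_minimalPeriod_of_pow_apply_ne (by decide), rfl, by decide, by decide, by decide⟩

end CompleteBipartiteGraph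

theorem altEmb_completeGraph_fin_five {x y : Fin 5} (hxy : x ≠ y) :
    AltEmb (completeGraph (Fin 5)) x y 1 := by
  obtain ⟨σ, rfl, rfl⟩ := exists_perm_apply_eq_and_apply_eq (by decide : (0 : Fin 5) ≠ 1) hxy
  exact AltEmb.map (Iso.completeGraph σ) ⟨k5RotSys, k5RotSys_genusLE, k5RotSys_altFace⟩

theorem altEmb_completeBipartiteGraph_inl {i : Fin 3} {y : Fin 3 ⊕ Fin 3} (hy : .inl i ≠ y) :
    AltEmb (completeBipartiteGraph (Fin 3) (Fin 3)) (.inl i) y 1 := by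
  rcases y with j | j
  · obtain ⟨σ, rfl, rfl⟩ := exists_perm_apply_eq_and_apply_eq (by decide : (0 : Fin 3) ≠ 1)
      (Sum.inl_injective.ne_iff.mp hy)
    exact AltEmb.map (completeBipartiteGraphCongr σ (Equiv.refl _))
      ⟨k33RotSys, k33RotSys_genusLE, k33RotSys_altFace_inl_inl⟩
  · have h := AltEmb.map (completeBipartiteGraphCongr (swap 0 i) (swap 0 j))
      ⟨k33RotSys, k33RotSys_genusLE, k33RotSys_altFace_inl_inr⟩
    simpa using h

theorem altEmb_completeBipartiteGraph {x y : Fin 3 ⊕ Fin 3} (hxy : x ≠ y) :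
    AltEmb (completeBipartiteGraph (Fin 3) (Fin 3)) x y 1 := by
  rcases x with i | i
  · exact altEmb_completeBipartiteGraph_inl hxy
  · have h := (altEmb_completeBipartiteGraph_inl (i := i) (y := y.swap)
      fun h => hxy (by rw [← Sum.swap_swap y, ← h]; rfl)).map
      (completeBipartiteGraphComm (Fin 3) (Fin 3))
    simpa [completeBipartiteGraphComm] using h

end AltPaper

open AltPaper in
/-- Both `K₅` and `K₃,₃` admit embeddings in the torus in which, for any pair
of distinct vertices `x, y`, some face contains `x` and `y` twice in alternating cyclic
order. -/
theorem statement_9 :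
    (∀ x y : Fin 5, x ≠ y → AltEmb (completeGraph (Fin 5)) x y 1) ∧
    (∀ x y : Fin 3 ⊕ Fin 3, x ≠ y →
      AltEmb (completeBipartiteGraph (Fin 3) (Fin 3)) x y 1) :=
  ⟨fun _ _ => altEmb_completeGraph_fin_five, fun _ _ => altEmb_completeBipartiteGraph⟩
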